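/- Let $Z$ be a fractional Brownian motion of Hurst parameter $H \in (0,1)$, i.e. a centered Gaussian process with covariance $\mathbb{E}(Z_s Z_t) = \frac{1}{2}(s^{2H} + t^{2H} - |t-s|^{2H})$. Fix $T > 0$, $\Delta \geqslant T$, set $t_i(\Delta) = (i-1)(T+\Delta)$ and $Z^i_t = Z_{t_i(\Delta)+t} - Z_{t_i(\Delta)}$. Then for all $i \neq k$ in $\{1,\dots,N\}$ and all $s \in [0,T]$, $|\mathbb{E}(Z^i_s Z^k_s)| \leqslant 8H|2H-1| T^2 |k-i|^{2H-2} \Delta^{2H-2}$. -/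

import Mathlib

/-!
With `a = tᵢ(Δ)`, `b = t_k(Δ)` and `d = b - a = (k - i)(T + Δ) ≥ 2s`, the covariance formula turns
`𝔼(Zⁱₛ Zᵏₛ)` into half the second difference `(d + s)^{2H} + (d - s)^{2H} - 2 d^{2H}`. The mean value
theorem, applied to `u ↦ (d + u)^{2H} + (d - u)^{2H}` on `[0, s]` and then to `x ↦ x^{2H-1}` on
`[d - u, d + u]`, bounds it by `4H|2H-1| s² (d - s)^{2H-2}`, and `(d - s)^{2H-2} ≤ 4 d^{2H-2}` because
`d - s ≥ d / 2`. Finally `d^{2H-2} ≤ (k - i)^{2H-2} Δ^{2H-2}`.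
-/

open MeasureTheory Real

lemma abs_rpow_sub_rpow_le {q a b : ℝ} (hq : q ≤ 1) (ha : 0 < a) (hab : a ≤ b) :
    |b ^ q - a ^ q| ≤ |q| * a ^ (q - 1) * (b - a) := by
  have hderiv : ∀ x ∈ Set.Icc a b, HasDerivWithinAt (· ^ q) (q * x ^ (q - 1)) (Set.Icc a b) x :=
    fun x hx => (hasDerivAt_rpow_const (Or.inl (ha.trans_le hx.1).ne')).hasDerivWithinAt
  have hbound : ∀ x ∈ Set.Icc a b, ‖q * x ^ (q - 1)‖ ≤ |q| * a ^ (q - 1) := by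
    intro x hx
    rw [norm_mul, norm_eq_abs, norm_of_nonneg (rpow_nonneg (ha.trans_le hx.1).le _)]
    exact mul_le_mul_of_nonneg_left (rpow_le_rpow_of_nonpos ha hx.1 (by linarith)) (abs_nonneg q)
  simpa [norm_eq_abs, abs_of_nonneg (sub_nonneg.2 hab)] using
    (convex_Icc a b).norm_image_sub_le_of_norm_hasDerivWithin_le hderiv hbound
      (Set.left_mem_Icc.2 hab) (Set.right_mem_Icc.2 hab)

lemma rpow_le_four_mul_rpow {q d x : ℝ} (hq₀ : -2 ≤ q) (hq : q ≤ 0) (hd : 0 < d)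
    (hx : d / 2 ≤ x) : x ^ q ≤ 4 * d ^ q := by
  have htwo : (2 : ℝ) ^ (-q) ≤ 4 := by
    calc (2 : ℝ) ^ (-q) ≤ 2 ^ (2 : ℝ) := rpow_le_rpow_of_exponent_le one_le_two (by linarith)
      _ = 4 := by norm_num
  calc x ^ q ≤ (d / 2) ^ q := rpow_le_rpow_of_nonpos (by positivity) hx hq
    _ = 2 ^ (-q) * d ^ q := by
        rw [div_rpow hd.le zero_le_two, rpow_neg zero_le_two, div_eq_inv_mul]
    _ ≤ 4 * d ^ q := by gcongr

lemma abs_rpow_add_sub_rpow_sub_le {p d u : ℝ} (hp₀ : 0 ≤ p) (hp : p ≤ 2) (hu : 0 ≤ u)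
    (hud : 2 * u ≤ d) (hd : 0 < d) :
    |(d + u) ^ (p - 1) - (d - u) ^ (p - 1)| ≤ 8 * |p - 1| * u * d ^ (p - 2) := by
  have hmvt := abs_rpow_sub_rpow_le (q := p - 1) (by linarith) (by linarith : 0 < d - u)
    (by linarith : d - u ≤ d + u)
  have hfour : (d - u) ^ (p - 2) ≤ 4 * d ^ (p - 2) :=
    rpow_le_four_mul_rpow (by linarith) (by linarith) hd (by linarith)
  rw [sub_sub, one_add_one_eq_two, show d + u - (d - u) = 2 * u by ring] at hmvt
  calc _ ≤ |p - 1| * (d - u) ^ (p - 2) * (2 * u) := hmvt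
    _ ≤ |p - 1| * (4 * d ^ (p - 2)) * (2 * u) := by gcongr
    _ = 8 * |p - 1| * u * d ^ (p - 2) := by ring

lemma abs_rpow_second_difference_le {p d s : ℝ} (hp₀ : 0 ≤ p) (hp : p ≤ 2) (hs : 0 ≤ s)
    (hsd : 2 * s ≤ d) (hd : 0 < d) :
    |(d + s) ^ p + (d - s) ^ p - 2 * d ^ p| ≤ 8 * p * |p - 1| * s ^ 2 * d ^ (p - 2) := by
  have hderiv : ∀ u ∈ Set.Icc 0 s, HasDerivWithinAt (fun u => (d + u) ^ p + (d - u) ^ p)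
      (p * ((d + u) ^ (p - 1) - (d - u) ^ (p - 1))) (Set.Icc 0 s) u := by
    intro u hu
    have hplus := ((hasDerivAt_id' u).const_add d).rpow_const (p := p) (Or.inl (by
      linarith [hu.1]))
    have hminus := ((hasDerivAt_id' u).const_sub d).rpow_const (p := p) (Or.inl (by
      linarith [hu.2]))
    exact ((hplus.add hminus).congr_deriv (by ring)).hasDerivWithinAt
  have hbound : ∀ u ∈ Set.Icc 0 s,
      ‖p * ((d + u) ^ (p - 1) - (d - u) ^ (p - 1))‖ ≤ p * (8 * |p - 1| * s * d ^ (p - 2)) := by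
    intro u hu
    rw [norm_mul, norm_of_nonneg hp₀, norm_eq_abs]
    gcongr
    exact (abs_rpow_add_sub_rpow_sub_le hp₀ hp hu.1 (by linarith [hu.2]) hd).trans
      (by gcongr; exact hu.2)
  have := (convex_Icc 0 s).norm_image_sub_le_of_norm_hasDerivWithin_le hderiv hbound
    (Set.left_mem_Icc.2 hs) (Set.right_mem_Icc.2 hs)
  simp only [norm_eq_abs, add_zero, sub_zero, abs_of_nonneg hs] at this
  calc _ = |(d + s) ^ p + (d - s) ^ p - (d ^ p + d ^ p)| := by ring_nf
    _ ≤ _ := this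
    _ = _ := by ring

section Increments

variable {Ω : Type*} [MeasurableSpace Ω] {P : Measure Ω} {Z : ℝ → Ω → ℝ}

lemma integral_sub_mul_sub_eq (hint : ∀ s t, Integrable (fun ω => Z s ω * Z t ω) P)
    (a a' b b' : ℝ) :
    ∫ ω, (Z a' ω - Z a ω) * (Z b' ω - Z b ω) ∂P =
      ∫ ω, Z a' ω * Z b' ω ∂P - ∫ ω, Z a' ω * Z b ω ∂P
        - (∫ ω, Z a ω * Z b' ω ∂P - ∫ ω, Z a ω * Z b ω ∂P) := by
  simp_rw [sub_mul, mul_sub]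
  rw [integral_sub, integral_sub (hint _ _) (hint _ _), integral_sub (hint _ _) (hint _ _)]
  exacts [(hint _ _).sub (hint _ _), (hint _ _).sub (hint _ _)]

variable {H : ℝ}
  (hcov : ∀ s t : ℝ, 0 ≤ s → 0 ≤ t →
    ∫ ω, Z s ω * Z t ω ∂P = (1 / 2) * (s ^ (2 * H) + t ^ (2 * H) - |t - s| ^ (2 * H)))
  (hint : ∀ s t, Integrable (fun ω => Z s ω * Z t ω) P)
include hcov hint

lemma integral_increment_mul_increment_eq {a b s : ℝ} (ha : 0 ≤ a) (hs : 0 ≤ s)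
    (hsb : s ≤ b - a) :
    ∫ ω, (Z (a + s) ω - Z a ω) * (Z (b + s) ω - Z b ω) ∂P
      = (1 / 2) * ((b - a + s) ^ (2 * H) + (b - a - s) ^ (2 * H) - 2 * (b - a) ^ (2 * H)) := by
  rw [integral_sub_mul_sub_eq hint, hcov _ _ (by linarith) (by linarith),
    hcov _ _ (by linarith) (by linarith), hcov _ _ ha (by linarith), hcov _ _ ha (by linarith),
    show b + s - (a + s) = b - a by ring, show b - (a + s) = b - a - s by ring,
    show b + s - a = b - a + s by ring, abs_of_nonneg (by linarith : 0 ≤ b - a),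
    abs_of_nonneg (by linarith : 0 ≤ b - a - s), abs_of_nonneg (by linarith : 0 ≤ b - a + s)]
  ring

lemma abs_integral_increment_mul_increment_le (hH₀ : 0 ≤ H) (hH₁ : H ≤ 1) {a b s : ℝ}
    (ha : 0 ≤ a) (hs : 0 ≤ s) (hsb : 2 * s ≤ b - a) (hab : a < b) :
    |∫ ω, (Z (a + s) ω - Z a ω) * (Z (b + s) ω - Z b ω) ∂P|
      ≤ 8 * H * |2 * H - 1| * s ^ 2 * (b - a) ^ (2 * H - 2) := by
  rw [integral_increment_mul_increment_eq hcov hint ha hs (by linarith), abs_mul,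
    abs_of_pos one_half_pos]
  have := abs_rpow_second_difference_le (p := 2 * H) (by linarith) (by linarith) hs hsb
    (sub_pos.2 hab)
  linarith

end Increments

theorem stmt2_general
    {Ω : Type*} [MeasurableSpace Ω] (P : Measure Ω)
    (H : ℝ) (hH : H ∈ Set.Ioo (0:ℝ) 1)
    (T Δ : ℝ) (hT : 0 < T) (hΔ : T ≤ Δ) (N : ℕ)
    (Z : ℝ → Ω → ℝ)
    -- fBm covariance
    (hcov : ∀ s t : ℝ, 0 ≤ s → 0 ≤ t →
      ∫ ω, Z s ω * Z t ω ∂P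
        = (1 / 2) * (s ^ (2 * H) + t ^ (2 * H) - |t - s| ^ (2 * H)))
    (hint : ∀ s t : ℝ, Integrable (fun ω => Z s ω * Z t ω) P) :
    ∀ i k : ℕ, 1 ≤ i → i ≤ N → 1 ≤ k → k ≤ N → i ≠ k → ∀ s ∈ Set.Icc (0:ℝ) T,
      |∫ ω, (Z (((i : ℝ) - 1) * (T + Δ) + s) ω - Z (((i : ℝ) - 1) * (T + Δ)) ω)
            * (Z (((k : ℝ) - 1) * (T + Δ) + s) ω - Z (((k : ℝ) - 1) * (T + Δ)) ω) ∂P|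
        ≤ 8 * H * |2 * H - 1| * T ^ 2
            * |(k : ℝ) - (i : ℝ)| ^ (2 * H - 2) * Δ ^ (2 * H - 2) := by
  intro i k hi hiN hk hkN hne s ⟨hs₀, hsT⟩
  obtain ⟨hH₀, hH₁⟩ := hH
  wlog hik : i < k generalizing i k
  · have := this k i hk hkN hi hiN hne.symm (hne.lt_or_gt.resolve_left hik)
    simp_rw [abs_sub_comm (k : ℝ), mul_comm (Z (((i : ℝ) - 1) * (T + Δ) + s) _ - _)]
    exact this
  have hki : 1 ≤ (k : ℝ) - i := by
    rw [le_sub_iff_add_le']; exact_mod_cast hik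
  have hgap : ((k : ℝ) - 1) * (T + Δ) - ((i : ℝ) - 1) * (T + Δ) = ((k : ℝ) - i) * (T + Δ) := by
    ring
  calc _ ≤ 8 * H * |2 * H - 1| * s ^ 2 * (((k : ℝ) - i) * (T + Δ)) ^ (2 * H - 2) := by
        rw [← hgap]
        refine abs_integral_increment_mul_increment_le hcov hint hH₀.le hH₁.le
          (mul_nonneg (by simp [hi]) (by linarith)) hs₀ ?_ ?_ <;> nlinarith
    _ ≤ 8 * H * |2 * H - 1| * T ^ 2 * (((k : ℝ) - i) ^ (2 * H - 2) * Δ ^ (2 * H - 2)) := by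
        rw [mul_rpow (by linarith) (by linarith)]
        gcongr 8 * H * |2 * H - 1| * ?_ * (_ * ?_)
        · exact mul_nonneg (rpow_nonneg (by linarith) _) (rpow_nonneg (by linarith) _)
        · exact pow_le_pow_left₀ hs₀ hsT 2
        · exact rpow_le_rpow_of_nonpos (by linarith) (by linarith) (by linarith)
    _ = _ := by rw [abs_of_nonneg (by linarith : (0 : ℝ) ≤ k - i)]; ring

/-- cross-covariance bound for increment copies of a fractional
Brownian motion separated by a forgetting period Δ ≥ T. -/
theorem stmt2
    {Ω : Type*} [MeasurableSpace Ω] (P : Measure Ω) [IsProbabilityMeasure P]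
    (H : ℝ) (hH : H ∈ Set.Ioo (0:ℝ) 1)
    (T Δ : ℝ) (hT : 0 < T) (hΔ : T ≤ Δ) (N : ℕ)
    (Z : ℝ → Ω → ℝ)
    -- fBm covariance
    (hcov : ∀ s t : ℝ, 0 ≤ s → 0 ≤ t →
      ∫ ω, Z s ω * Z t ω ∂P
        = (1 / 2) * (s ^ (2 * H) + t ^ (2 * H) - |t - s| ^ (2 * H)))
    (hint : ∀ s t : ℝ, Integrable (fun ω => Z s ω * Z t ω) P) :
    ∀ i k : ℕ, 1 ≤ i → i ≤ N → 1 ≤ k → k ≤ N → i ≠ k → ∀ s ∈ Set.Icc (0:ℝ) T,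
      |∫ ω, (Z (((i : ℝ) - 1) * (T + Δ) + s) ω - Z (((i : ℝ) - 1) * (T + Δ)) ω)
            * (Z (((k : ℝ) - 1) * (T + Δ) + s) ω - Z (((k : ℝ) - 1) * (T + Δ)) ω) ∂P|
        ≤ 8 * H * |2 * H - 1| * T ^ 2
            * |(k : ℝ) - (i : ℝ)| ^ (2 * H - 2) * Δ ^ (2 * H - 2) :=
  stmt2_general P H hH T Δ hT hΔ N Z hcov hint
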